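/- Let n ≥ 1 and R = C[x1,…,x_{2n+1}] ⊗ Λ(η1,…,η_{2n+1}), with D12 = ∂_{x_{2n+1}}∂_{η_{2n+1}} + Σ_{i=1}^{n}(∂_{x_i}∂_{η_{2n+1−i}} − ∂_{x_{2n+1−i}}∂_{η_i}) and D22 = ∂_{x_{2n+1}}² + 2Σ_{i=1}^{n}∂_{η_i}∂_{η_{2n+1−i}}. Then for all d ≥ 0: (a) for 1 ≤ k ≤ n, the vector ω̃_{d,k} = x1^d Γ([k]) satisfies D12 ω̃_{d,k} = 0 and D22 ω̃_{d,k} = 0; (b) the vector ω̃_{d,n+1} = x1^d x_{2n+1} Γ([n]) − x1^d η_{2n+1} η_1⋯η_n satisfies D12 ω̃_{d,n+1} = 0 and D22 ω̃_{d,n+1} = 0. -/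
import Mathlib

open scoped TensorProduct

noncomputable section

/-- Polynomial part `ℂ[x₁,…,x_m]`. -/
abbrev PolyPart (m : ℕ) := MvPolynomial (Fin m) ℂ

/-- Exterior part `Λ(η₁,…,η_m)`. -/
abbrev ExtPart (m : ℕ) := ExteriorAlgebra ℂ (Fin m → ℂ)

/-- The supersymmetric algebra `R = ℂ[x₁,…,x_m] ⊗ Λ(η₁,…,η_m)`. -/
abbrev SAlg (m : ℕ) := PolyPart m ⊗[ℂ] ExtPart m

/-- The even generator `x_i`. -/
def Xv {m : ℕ} (i : Fin m) : SAlg m := (MvPolynomial.X i) ⊗ₜ[ℂ] 1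

/-- The odd generator `η_i`. -/
def ηv {m : ℕ} (i : Fin m) : SAlg m :=
  1 ⊗ₜ[ℂ] (ExteriorAlgebra.ι ℂ (Pi.single i 1))

/-- The partial derivative `∂_{x_i}` (acting on the polynomial factor). -/
def dX {m : ℕ} (i : Fin m) : SAlg m →ₗ[ℂ] SAlg m :=
  LinearMap.rTensor (ExtPart m) (MvPolynomial.pderiv i).toLinearMap

/-- The odd left superderivation `∂_{η_i}` with `∂_{η_i}(η_j) = δ_{ij}`, realized as
left contraction of the exterior factor with the `i`-th coordinate functional. -/
def dη {m : ℕ} (i : Fin m) : SAlg m →ₗ[ℂ] SAlg m :=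
  LinearMap.lTensor (PolyPart m)
    (CliffordAlgebra.contractLeft (LinearMap.proj i : (Fin m → ℂ) →ₗ[ℂ] ℂ))

/-- Multiplication by `x_i`. -/
def mX {m : ℕ} (i : Fin m) : SAlg m →ₗ[ℂ] SAlg m := LinearMap.mulLeft ℂ (Xv i)

/-- Multiplication by `η_i`. -/
def mη {m : ℕ} (i : Fin m) : SAlg m →ₗ[ℂ] SAlg m := LinearMap.mulLeft ℂ (ηv i)

/-- Ordered product `η_{i₁}⋯η_{i_r}` over a list of indices. -/
def ηProdList {m : ℕ} (l : List (Fin m)) : SAlg m := (l.map ηv).prod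

/-- The product `η₁η₂⋯η_k` of the first `k` odd generators. -/
def ηTake (m k : ℕ) : SAlg m := ηProdList ((List.finRange m).take k)

/-- `Γ([k]) = Σ_{j=1}^{k} (−1)^{j−1} x_j η₁⋯η̂_j⋯η_k` (0-indexed internally). -/
def GammaK (m k : ℕ) : SAlg m :=
  ∑ j ∈ Finset.range k,
    if h : j < m then
      ((-1 : ℂ) ^ j) •
        (Xv ⟨j, h⟩ *
          ηProdList (((List.finRange m).take k).filter (fun a => (a : ℕ) ≠ j)))
    else 0

/-- `D₁₂ = ∂_{x_{2n+1}}∂_{η_{2n+1}} + Σ_{i=1}^{n}(∂_{x_i}∂_{η_{2n+1−i}} − ∂_{x_{2n+1−i}}∂_{η_i})`. -/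
def D12g (n : ℕ) : SAlg (2*n+1) →ₗ[ℂ] SAlg (2*n+1) :=
  dX (Fin.last (2*n)) ∘ₗ dη (Fin.last (2*n)) +
    ∑ i : Fin n,
      (dX ⟨i.1, by have := i.2; omega⟩ ∘ₗ dη ⟨2*n-1-i.1, by omega⟩ -
       dX ⟨2*n-1-i.1, by omega⟩ ∘ₗ dη ⟨i.1, by have := i.2; omega⟩)

/-- `D₂₂ = ∂_{x_{2n+1}}² + 2Σ_{i=1}^{n}∂_{η_i}∂_{η_{2n+1−i}}`. -/
def D22g (n : ℕ) : SAlg (2*n+1) →ₗ[ℂ] SAlg (2*n+1) :=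
  dX (Fin.last (2*n)) ∘ₗ dX (Fin.last (2*n)) +
    (2 : ℂ) • ∑ i : Fin n,
      dη ⟨i.1, by have := i.2; omega⟩ ∘ₗ dη ⟨2*n-1-i.1, by omega⟩

namespace Stmt9Aux

/-- Exterior product of the η's in a list. -/
def eL {m : ℕ} (l : List (Fin m)) : ExtPart m :=
  (l.map (fun i => ExteriorAlgebra.ι ℂ (Pi.single i 1))).prod

lemma eL_nil {m : ℕ} : eL ([] : List (Fin m)) = 1 := rfl

lemma eL_cons {m : ℕ} (a : Fin m) (l : List (Fin m)) :
    eL (a :: l) = ExteriorAlgebra.ι ℂ (Pi.single a 1) * eL l := by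
  simp [eL]

lemma ηProdList_eq {m : ℕ} (l : List (Fin m)) :
    ηProdList l = (1 : PolyPart m) ⊗ₜ[ℂ] eL l := by
  induction l with
  | nil => simp [ηProdList, eL, Algebra.TensorProduct.one_def]
  | cons a l ih =>
      simp only [ηProdList, List.map_cons, List.prod_cons] at *
      rw [ih, eL_cons, ηv, Algebra.TensorProduct.tmul_mul_tmul, one_mul]

lemma contract_eL {m : ℕ} (i : Fin m) (l : List (Fin m)) (h : i ∉ l) :
    CliffordAlgebra.contractLeft (LinearMap.proj i : (Fin m → ℂ) →ₗ[ℂ] ℂ) (eL l) = 0 := by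
  induction l with
  | nil => simp [eL_nil, CliffordAlgebra.contractLeft_one]
  | cons a l ih =>
      have hia : i ≠ a := fun hh => h (by simp [hh])
      have hil : i ∉ l := fun hh => h (by simp [hh])
      rw [eL_cons]
      rw [show (ExteriorAlgebra.ι ℂ (Pi.single a (1:ℂ))) =
        CliffordAlgebra.ι (0 : QuadraticForm ℂ (Fin m → ℂ)) (Pi.single a 1) from rfl]
      rw [CliffordAlgebra.contractLeft_ι_mul, ih hil]
      simp [Pi.single_apply, hia.symm]

lemma dX_tmul {m : ℕ} (b : Fin m) (p : PolyPart m) (w : ExtPart m) :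
    dX b (p ⊗ₜ[ℂ] w) = (MvPolynomial.pderiv b p) ⊗ₜ[ℂ] w := rfl

lemma dη_tmul {m : ℕ} (i : Fin m) (p : PolyPart m) (w : ExtPart m) :
    dη i (p ⊗ₜ[ℂ] w) =
      p ⊗ₜ[ℂ] (CliffordAlgebra.contractLeft
        (LinearMap.proj i : (Fin m → ℂ) →ₗ[ℂ] ℂ) w) := rfl

lemma comp_kill {m : ℕ} (b i : Fin m) (p : PolyPart m) (l : List (Fin m))
    (h : MvPolynomial.pderiv b p = 0 ∨ i ∉ l) :
    (dX b ∘ₗ dη i) (p ⊗ₜ[ℂ] eL l) = 0 := by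
  rw [LinearMap.comp_apply, dη_tmul, dX_tmul]
  rcases h with h | h
  · rw [h, TensorProduct.zero_tmul]
  · rw [contract_eL i l h]; simp

lemma ddη_kill {m : ℕ} (i j : Fin m) (p : PolyPart m) (l : List (Fin m))
    (h : j ∉ l) :
    (dη i ∘ₗ dη j) (p ⊗ₜ[ℂ] eL l) = 0 := by
  rw [LinearMap.comp_apply, dη_tmul, contract_eL j l h]
  simp [dη_tmul]

lemma D12_kill (n : ℕ) (p : PolyPart (2*n+1)) (l : List (Fin (2*n+1)))
    (h2n : MvPolynomial.pderiv (Fin.last (2*n)) p = 0 ∨ (Fin.last (2*n)) ∉ l)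
    (hhigh : ∀ a ∈ l, (a : ℕ) < n ∨ (a : ℕ) = 2*n)
    (hmid : ∀ b : Fin (2*n+1), n ≤ (b : ℕ) → (b : ℕ) < 2*n →
      MvPolynomial.pderiv b p = 0) :
    D12g n (p ⊗ₜ[ℂ] eL l) = 0 := by
  rw [D12g, LinearMap.add_apply, LinearMap.sum_apply,
    comp_kill _ _ _ _ h2n, Finset.sum_eq_zero, add_zero]
  intro i _
  rw [LinearMap.sub_apply,
    comp_kill _ _ _ _ (Or.inr (fun hmem => by
      rcases hhigh _ hmem with h | h <;> simp at h <;> omega)),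
    comp_kill _ _ _ _ (Or.inl (hmid _ (by simp; omega) (by simp; omega))),
    sub_zero]

lemma D22_kill (n : ℕ) (p : PolyPart (2*n+1)) (l : List (Fin (2*n+1)))
    (hxx : MvPolynomial.pderiv (Fin.last (2*n))
      (MvPolynomial.pderiv (Fin.last (2*n)) p) = 0)
    (hhigh : ∀ a ∈ l, (a : ℕ) < n ∨ (a : ℕ) = 2*n) :
    D22g n (p ⊗ₜ[ℂ] eL l) = 0 := by
  rw [D22g, LinearMap.add_apply, LinearMap.smul_apply, LinearMap.sum_apply]
  rw [show (dX (Fin.last (2*n)) ∘ₗ dX (Fin.last (2*n))) (p ⊗ₜ[ℂ] eL l) = 0 from by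
    rw [LinearMap.comp_apply, dX_tmul, dX_tmul, hxx, TensorProduct.zero_tmul]]
  rw [Finset.sum_eq_zero, smul_zero, add_zero]
  intro i _
  exact ddη_kill _ _ _ _ (fun hmem => by
    rcases hhigh _ hmem with h | h <;> simp at h <;> omega)

lemma mem_take_finRange {m k : ℕ} {a : Fin m} (h : a ∈ (List.finRange m).take k) :
    (a : ℕ) < k := by
  rw [List.mem_take_iff_getElem] at h
  obtain ⟨i, hi, rfl⟩ := h
  simp only [List.getElem_finRange]
  simp at hi ⊢
  omega

lemma Xv_pow {m : ℕ} (i : Fin m) (d : ℕ) :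
    (Xv i) ^ d = (MvPolynomial.X i ^ d) ⊗ₜ[ℂ] 1 := by
  rw [Xv, Algebra.TensorProduct.tmul_pow, one_pow]

lemma tensor_form {m : ℕ} (c : PolyPart m) (j : Fin m) (l : List (Fin m)) :
    (c ⊗ₜ[ℂ] (1 : ExtPart m)) * (Xv j * ηProdList l) =
      (c * MvPolynomial.X j) ⊗ₜ[ℂ] eL l := by
  rw [ηProdList_eq, Xv, Algebra.TensorProduct.tmul_mul_tmul,
    Algebra.TensorProduct.tmul_mul_tmul]
  simp

end Stmt9Aux

set_option maxHeartbeats 2000000 in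
open Stmt9Aux in
/-- for `n ≥ 1` and all `d ≥ 0`:
(a) for `1 ≤ k ≤ n` the vector `ω̃_{d,k} = x₁^d Γ([k])` is annihilated by `D₁₂` and `D₂₂`;
(b) the vector `ω̃_{d,n+1} = x₁^d x_{2n+1} Γ([n]) − x₁^d η_{2n+1} η₁⋯η_n` is annihilated
by `D₁₂` and `D₂₂`. -/
theorem stmt9 (n : ℕ) (hn : 1 ≤ n) (d : ℕ) :
    (∀ k, 1 ≤ k → k ≤ n →
      D12g n ((Xv (⟨0, by omega⟩ : Fin (2*n+1))) ^ d * GammaK (2*n+1) k) = 0 ∧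
      D22g n ((Xv (⟨0, by omega⟩ : Fin (2*n+1))) ^ d * GammaK (2*n+1) k) = 0) ∧
    (D12g n ((Xv (⟨0, by omega⟩ : Fin (2*n+1))) ^ d * Xv (Fin.last (2*n)) * GammaK (2*n+1) n -
        (Xv (⟨0, by omega⟩ : Fin (2*n+1))) ^ d * ηv (Fin.last (2*n)) * ηTake (2*n+1) n) = 0 ∧
     D22g n ((Xv (⟨0, by omega⟩ : Fin (2*n+1))) ^ d * Xv (Fin.last (2*n)) * GammaK (2*n+1) n -
        (Xv (⟨0, by omega⟩ : Fin (2*n+1))) ^ d * ηv (Fin.last (2*n)) * ηTake (2*n+1) n) = 0) := by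
  have h0m : (0 : ℕ) < 2*n+1 := by omega
  set z : Fin (2*n+1) := ⟨0, h0m⟩ with hz
  have hzlast : z ≠ Fin.last (2*n) := by
    intro hh; apply_fun Fin.val at hh; simp [hz, Fin.last] at hh; omega
  -- expansion of `(c ⊗ 1) * GammaK (2n+1) k` as a sum of pure tensors
  have key : ∀ (c : PolyPart (2*n+1)) (k : ℕ), k ≤ n →
      (c ⊗ₜ[ℂ] (1 : ExtPart (2*n+1))) * GammaK (2*n+1) k =
        ∑ j ∈ Finset.range k,
          if h : j < 2*n+1 then
            ((-1 : ℂ) ^ j) • ((c * MvPolynomial.X ⟨j, h⟩) ⊗ₜ[ℂ]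
              eL (((List.finRange (2*n+1)).take k).filter (fun a => (a : ℕ) ≠ j)))
          else 0 := by
    intro c k hk
    rw [GammaK, Finset.mul_sum]
    refine Finset.sum_congr rfl (fun j hj => ?_)
    have hjm : j < 2*n+1 := by have := Finset.mem_range.mp hj; omega
    rw [dif_pos hjm, dif_pos hjm, mul_smul_comm, tensor_form]
  have hXpow : (Xv z) ^ d = (MvPolynomial.X z ^ d) ⊗ₜ[ℂ] (1 : ExtPart (2*n+1)) :=
    Xv_pow z d
  -- the main computation: both operators kill `(c ⊗ 1) * GammaK (2n+1) k`
  have mainA : ∀ (c : PolyPart (2*n+1)) (k : ℕ), k ≤ n →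
      (∀ b : Fin (2*n+1), n ≤ (b : ℕ) → (b : ℕ) < 2*n → MvPolynomial.pderiv b c = 0) →
      MvPolynomial.pderiv (Fin.last (2*n)) (MvPolynomial.pderiv (Fin.last (2*n)) c) = 0 →
      D12g n ((c ⊗ₜ[ℂ] (1 : ExtPart (2*n+1))) * GammaK (2*n+1) k) = 0 ∧
      D22g n ((c ⊗ₜ[ℂ] (1 : ExtPart (2*n+1))) * GammaK (2*n+1) k) = 0 := by
    intro c k hk hcmid hcxx
    rw [key c k hk]
    have term_facts : ∀ j, j < k → ∀ _h : j < 2*n+1,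
        (∀ a ∈ ((List.finRange (2*n+1)).take k).filter
            (fun a : Fin (2*n+1) => (a : ℕ) ≠ j), (a : ℕ) < n) := by
      intro j hjk h a ha
      have := mem_take_finRange (List.mem_of_mem_filter ha)
      omega
    constructor
    · rw [map_sum]
      refine Finset.sum_eq_zero (fun j hj => ?_)
      have hjk : j < k := Finset.mem_range.mp hj
      have hjm : j < 2*n+1 := by omega
      rw [dif_pos hjm, map_smul]
      have hhigh' := term_facts j hjk hjm
      have hhigh : ∀ a ∈ ((List.finRange (2*n+1)).take k).filter
          (fun a : Fin (2*n+1) => (a : ℕ) ≠ j), (a : ℕ) < n ∨ (a : ℕ) = 2*n :=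
        fun a ha => Or.inl (hhigh' a ha)
      rw [D12_kill n _ _
        (Or.inr (fun hmem => by
          have := hhigh' _ hmem; simp [Fin.last] at this; omega))
        hhigh
        (fun b hb1 hb2 => by
          have hjb : (⟨j, hjm⟩ : Fin (2*n+1)) ≠ b := by
            intro hh; apply_fun Fin.val at hh; simp at hh; omega
          rw [MvPolynomial.pderiv_mul, hcmid b hb1 hb2,
            MvPolynomial.pderiv_X_of_ne hjb, zero_mul, mul_zero, add_zero]),
        smul_zero]
    · rw [map_sum]
      refine Finset.sum_eq_zero (fun j hj => ?_)
      have hjk : j < k := Finset.mem_range.mp hj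
      have hjm : j < 2*n+1 := by omega
      rw [dif_pos hjm, map_smul]
      have hhigh' := term_facts j hjk hjm
      have hhigh : ∀ a ∈ ((List.finRange (2*n+1)).take k).filter
          (fun a : Fin (2*n+1) => (a : ℕ) ≠ j), (a : ℕ) < n ∨ (a : ℕ) = 2*n :=
        fun a ha => Or.inl (hhigh' a ha)
      rw [D22_kill n _ _
        (by
          have hjb : (⟨j, hjm⟩ : Fin (2*n+1)) ≠ Fin.last (2*n) := by
            intro hh; apply_fun Fin.val at hh; simp [Fin.last] at hh; omega
          rw [MvPolynomial.pderiv_mul, MvPolynomial.pderiv_X_of_ne hjb, mul_zero,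
            add_zero, MvPolynomial.pderiv_mul, MvPolynomial.pderiv_X_of_ne hjb,
            mul_zero, add_zero, hcxx, zero_mul])
        hhigh, smul_zero]
  -- derivative facts for the two coefficient polynomials
  have hc1mid : ∀ b : Fin (2*n+1), n ≤ (b : ℕ) → (b : ℕ) < 2*n →
      MvPolynomial.pderiv b ((MvPolynomial.X z : PolyPart (2*n+1)) ^ d) = 0 := by
    intro b hb1 hb2
    have hzb : z ≠ b := by
      intro hh; apply_fun Fin.val at hh; simp [hz] at hh; omega
    rw [MvPolynomial.pderiv_pow, MvPolynomial.pderiv_X_of_ne hzb, mul_zero]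
  have hc1last : MvPolynomial.pderiv (Fin.last (2*n))
      ((MvPolynomial.X z : PolyPart (2*n+1)) ^ d) = 0 := by
    rw [MvPolynomial.pderiv_pow, MvPolynomial.pderiv_X_of_ne hzlast, mul_zero]
  have partB : D12g n ((Xv z) ^ d * Xv (Fin.last (2*n)) * GammaK (2*n+1) n -
        (Xv z) ^ d * ηv (Fin.last (2*n)) * ηTake (2*n+1) n) = 0 ∧
      D22g n ((Xv z) ^ d * Xv (Fin.last (2*n)) * GammaK (2*n+1) n -
        (Xv z) ^ d * ηv (Fin.last (2*n)) * ηTake (2*n+1) n) = 0 := by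
    have hsplit1 : (Xv z) ^ d * Xv (Fin.last (2*n)) =
        ((MvPolynomial.X z ^ d * MvPolynomial.X (Fin.last (2*n)) : PolyPart (2*n+1)))
          ⊗ₜ[ℂ] (1 : ExtPart (2*n+1)) := by
      rw [hXpow, Xv, Algebra.TensorProduct.tmul_mul_tmul, one_mul]
    have hsplit2 : (Xv z) ^ d * ηv (Fin.last (2*n)) * ηTake (2*n+1) n =
        (MvPolynomial.X z ^ d) ⊗ₜ[ℂ]
          eL ((Fin.last (2*n)) :: (List.finRange (2*n+1)).take n) := by
      rw [hXpow, ηv, ηTake, ηProdList_eq, Algebra.TensorProduct.tmul_mul_tmul,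
        Algebra.TensorProduct.tmul_mul_tmul, eL_cons]
      simp
    have hc2mid : ∀ b : Fin (2*n+1), n ≤ (b : ℕ) → (b : ℕ) < 2*n →
        MvPolynomial.pderiv b
          (MvPolynomial.X z ^ d * MvPolynomial.X (Fin.last (2*n)) : PolyPart (2*n+1)) = 0 := by
      intro b hb1 hb2
      have hlb : Fin.last (2*n) ≠ b := by
        intro hh; apply_fun Fin.val at hh; simp [Fin.last] at hh; omega
      rw [MvPolynomial.pderiv_mul, hc1mid b hb1 hb2, zero_mul,
        MvPolynomial.pderiv_X_of_ne hlb, mul_zero, add_zero]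
    have hc2xx : MvPolynomial.pderiv (Fin.last (2*n)) (MvPolynomial.pderiv (Fin.last (2*n))
        (MvPolynomial.X z ^ d * MvPolynomial.X (Fin.last (2*n)) : PolyPart (2*n+1))) = 0 := by
      rw [MvPolynomial.pderiv_mul, hc1last, zero_mul, MvPolynomial.pderiv_X_self,
        mul_one, zero_add, hc1last]
    have hhigh2 : ∀ a ∈ ((Fin.last (2*n)) :: (List.finRange (2*n+1)).take n),
        (a : ℕ) < n ∨ (a : ℕ) = 2*n := by
      intro a ha
      rcases List.mem_cons.mp ha with h | h
      · right; rw [h]; simp [Fin.last]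
      · left; exact mem_take_finRange h
    have hA := mainA _ n le_rfl hc2mid hc2xx
    have hB12 : D12g n ((MvPolynomial.X z ^ d : PolyPart (2*n+1)) ⊗ₜ[ℂ]
        eL ((Fin.last (2*n)) :: (List.finRange (2*n+1)).take n)) = 0 :=
      D12_kill n _ _ (Or.inl hc1last) hhigh2 hc1mid
    have hB22 : D22g n ((MvPolynomial.X z ^ d : PolyPart (2*n+1)) ⊗ₜ[ℂ]
        eL ((Fin.last (2*n)) :: (List.finRange (2*n+1)).take n)) = 0 :=
      D22_kill n _ _ (by rw [hc1last, map_zero]) hhigh2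
    constructor
    · rw [hsplit1, map_sub, hsplit2, hA.1, hB12, sub_zero]
    · rw [hsplit1, map_sub, hsplit2, hA.2, hB22, sub_zero]
  exact ⟨fun k _ hk => by rw [hXpow]; exact mainA _ k hk hc1mid (by rw [hc1last, map_zero]),
    partB.1, partB.2⟩
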